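/- If |A| > 1, then for any two-sided ideals I, J of A*, τ_{I∩J} = τ_I ∩ τ_J and τ_{I∪J} = τ_I ∪ τ_J; hence I ↦ τ_I is a lattice isomorphism from the lattice of ideals of A* onto the lattice of special right congruences on A^{-ω}. -/

import Mathlib

/- Left infinite words over A are modelled as functions ℕ → A, where index 0 is
   the rightmost letter.  Appending a finite word on the right: -/

def lapp {A : Type*} (x : ℕ → A) (u : List A) : ℕ → A := fun n =>
  if h : n < u.length then u.reverse[n]'(by simpa using h) else x (n - u.length)

/-- u ∈ A* is a suffix of the left infinite word x -/
def IsLSuffix {A : Type*} (u : List A) (x : ℕ → A) : Prop := ∃ y : ℕ → A, x = lapp y u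

/-- right congruence on A^{-ω}: an equivalence relation compatible with the
  right action of A* (equivalently, with appending each letter) -/
def IsRightCongruence {A : Type*} (ρ : (ℕ → A) → (ℕ → A) → Prop) : Prop :=
  Equivalence ρ ∧ ∀ x y : ℕ → A, ∀ a : A, ρ x y → ρ (lapp x [a]) (lapp y [a])

section Graphs

variable {A Q : Type*}

/-- a left infinite path labelled x ending at q, in the A-graph with edge
  relation E (E p a q : there is an edge from p to q labelled a) -/
def HasLInfPath (E : Q → A → Q → Prop) (x : ℕ → A) (q : Q) : Prop :=
  ∃ f : ℕ → Q, f 0 = q ∧ ∀ n : ℕ, E (f (n + 1)) (x n) (f n)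

def OmegaDeterministic (E : Q → A → Q → Prop) : Prop :=
  ∀ x : ℕ → A, ∀ q q' : Q, HasLInfPath E x q → HasLInfPath E x q' → q = q'

def OmegaComplete (E : Q → A → Q → Prop) : Prop :=
  ∀ x : ℕ → A, ∃ q : Q, HasLInfPath E x q

def OmegaTrim (E : Q → A → Q → Prop) : Prop :=
  ∀ q : Q, ∃ x : ℕ → A, HasLInfPath E x q

/-- (-ω)-reset graph -/
def OmegaReset (E : Q → A → Q → Prop) : Prop :=
  OmegaDeterministic E ∧ OmegaComplete E ∧ OmegaTrim E

/-- finite paths: HasPath E q u q' means u labels a path from q to q' -/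
def HasPath (E : Q → A → Q → Prop) : Q → List A → Q → Prop
  | q, [], q' => q = q'
  | q, a :: u, q' => ∃ p : Q, E q a p ∧ HasPath E p u q'

end Graphs

/-- the setoid on A^{-ω} given by a right congruence -/
def caySetoid {A : Type*} {ρ : (ℕ → A) → (ℕ → A) → Prop} (hρ : IsRightCongruence ρ) :
    Setoid (ℕ → A) := ⟨ρ, hρ.1⟩

/-- the edge relation of the Cayley graph Cay(ρ): edges (uρ, a, (ua)ρ) -/
def cayE {A : Type*} {ρ : (ℕ → A) → (ℕ → A) → Prop} (hρ : IsRightCongruence ρ) :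
    Quotient (caySetoid hρ) → A → Quotient (caySetoid hρ) → Prop :=
  fun c a c' => ∃ u : ℕ → A, c = Quotient.mk (caySetoid hρ) u ∧
    c' = Quotient.mk (caySetoid hρ) (lapp u [a])

/-- the relation τ_P: x τ_P y iff x = y or some u ∈ P is a common suffix of x and y -/
def relTau {A : Type*} (P : Set (List A)) : (ℕ → A) → (ℕ → A) → Prop :=
  fun x y => x = y ∨ ∃ u ∈ P, IsLSuffix u x ∧ IsLSuffix u y

/-- the suffix-minimal elements of L ⊆ A* (denoted Lβ_ℓ) -/
def minSuffix {A : Type*} (L : Set (List A)) : Set (List A) :=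
  {u | u ∈ L ∧ ∀ v ∈ L, v <:+ u → v = u}

/-- suffix code: an antichain for the suffix order -/
def IsSuffixCode {A : Type*} (S : Set (List A)) : Prop :=
  ∀ u ∈ S, ∀ v ∈ S, u <:+ v → u = v

/-! The finite suffixes of a left infinite word form a chain for the suffix order. So if `u ∈ I`
and `v ∈ J` are common suffixes of `x` and `y`, the longer of the two is a left extension of the
other and lies in `I ∩ J`, since ideals are closed under left extension; unions are immediate.
For order reflection pick letters `a ≠ b`: for `u ∈ I` the words `…aaa u` and `…bbb u` are
`τ_I`-related and their common suffixes are exactly the suffixes of `u`, so `τ_I ⊆ τ_J` gives a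
suffix of `u` in `J`, whence `u ∈ J`. -/

section LeftInfiniteWords

variable {A : Type*}

@[simp]
lemma lapp_apply_of_lt (x : ℕ → A) {u : List A} {n : ℕ} (hn : n < u.length) :
    lapp x u n = u.reverse[n]'(by simpa using hn) := by
  simp [lapp, hn]

@[simp]
lemma lapp_apply_of_le (x : ℕ → A) {u : List A} {n : ℕ} (hn : u.length ≤ n) :
    lapp x u n = x (n - u.length) := by
  simp [lapp, Nat.not_lt.mpr hn]

lemma isLSuffix_lapp (y : ℕ → A) (u : List A) : IsLSuffix u (lapp y u) :=
  ⟨y, rfl⟩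

lemma IsLSuffix.apply {u : List A} {x : ℕ → A} (h : IsLSuffix u x) {n : ℕ}
    (hn : n < u.length) : x n = u.reverse[n]'(by simpa using hn) := by
  obtain ⟨y, rfl⟩ := h
  exact lapp_apply_of_lt y hn

lemma isLSuffix_iff_reverse_eq {u : List A} {x : ℕ → A} :
    IsLSuffix u x ↔ u.reverse = (List.range u.length).map x := by
  refine ⟨fun h => List.ext_getElem (by simp) fun n h₁ _ => ?_, fun h => ?_⟩
  · simp only [List.getElem_map, List.getElem_range]
    exact (h.apply (by simpa using h₁)).symm
  · refine ⟨fun n => x (n + u.length), funext fun n => ?_⟩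
    rcases Nat.lt_or_ge n u.length with hn | hn
    · simp [hn, List.getElem_of_eq h]
    · simp [hn]

lemma IsLSuffix.suffix_of_length_le {u v : List A} {x : ℕ → A} (hu : IsLSuffix u x)
    (hv : IsLSuffix v x) (hle : u.length ≤ v.length) : u <:+ v := by
  rw [isLSuffix_iff_reverse_eq] at hu hv
  rw [← List.reverse_prefix, hu, hv, ← Nat.min_eq_left hle, ← List.take_range,
    List.map_take]
  exact List.take_prefix _ _

lemma suffix_of_isLSuffix_lapp {u v : List A} {y z : ℕ → A} (hyz : y 0 ≠ z 0)
    (hy : IsLSuffix v (lapp y u)) (hz : IsLSuffix v (lapp z u)) : v <:+ u := by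
  have hlen : v.length ≤ u.length := by
    by_contra! hlt
    exact hyz (by simpa using (hy.apply hlt).trans (hz.apply hlt).symm)
  exact hy.suffix_of_length_le (isLSuffix_lapp y u) hlen

end LeftInfiniteWords

section RelTau

variable {A : Type*} {I J : Set (List A)} {x y : ℕ → A}

lemma relTau_mono (h : I ⊆ J) : relTau I x y → relTau J x y := by
  rintro (rfl | ⟨u, hu, hx, hy⟩)
  exacts [Or.inl rfl, Or.inr ⟨u, h hu, hx, hy⟩]

lemma relTau_union : relTau (I ∪ J) x y ↔ relTau I x y ∨ relTau J x y := by
  refine ⟨?_, fun h => h.elim (relTau_mono Set.subset_union_left)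
    (relTau_mono Set.subset_union_right)⟩
  rintro (rfl | ⟨u, hu | hu, hx, hy⟩)
  exacts [Or.inl (Or.inl rfl), Or.inl (Or.inr ⟨u, hu, hx, hy⟩), Or.inr (Or.inr ⟨u, hu, hx, hy⟩)]

lemma relTau_inter (hI : ∀ u ∈ I, ∀ w : List A, w ++ u ∈ I)
    (hJ : ∀ v ∈ J, ∀ w : List A, w ++ v ∈ J) :
    relTau (I ∩ J) x y ↔ relTau I x y ∧ relTau J x y := by
  refine ⟨fun h => ⟨relTau_mono Set.inter_subset_left h,
    relTau_mono Set.inter_subset_right h⟩, ?_⟩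
  rintro ⟨hxy | ⟨u, hu, hux, huy⟩, hxy | ⟨v, hv, hvx, hvy⟩⟩
  iterate 3 exact Or.inl ‹x = y›
  rcases le_total u.length v.length with hle | hle
  · obtain ⟨w, rfl⟩ := hux.suffix_of_length_le hvx hle
    exact Or.inr ⟨w ++ u, ⟨hI u hu w, hv⟩, hvx, hvy⟩
  · obtain ⟨w, rfl⟩ := hvx.suffix_of_length_le hux hle
    exact Or.inr ⟨w ++ v, ⟨hu, hJ v hv w⟩, hux, huy⟩

lemma subset_of_relTau_le {a b : A} (hab : a ≠ b) (hJ : ∀ v ∈ J, ∀ w : List A, w ++ v ∈ J)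
    (h : ∀ x y : ℕ → A, relTau I x y → relTau J x y) : I ⊆ J := by
  intro u hu
  have hne : lapp (fun _ => a) u ≠ lapp (fun _ => b) u := fun he =>
    hab (by simpa using congrFun he u.length)
  rcases h _ _ (Or.inr ⟨u, hu, isLSuffix_lapp _ u, isLSuffix_lapp _ u⟩) with he | ⟨v, hv, hva, hvb⟩
  · exact absurd he hne
  obtain ⟨w, rfl⟩ := suffix_of_isLSuffix_lapp hab hva hvb
  exact hJ v hv w

lemma relTau_le_iff_subset {a b : A} (hab : a ≠ b) (hJ : ∀ v ∈ J, ∀ w : List A, w ++ v ∈ J) :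
    (∀ x y : ℕ → A, relTau I x y → relTau J x y) ↔ I ⊆ J :=
  ⟨subset_of_relTau_le hab hJ, fun h _ _ => relTau_mono h⟩

end RelTau

theorem relTau_lattice_iso_general {A : Type*} (h2 : ∃ a b : A, a ≠ b) :
    (∀ I J : Set (List A),
      (∀ u ∈ I, ∀ v w : List A, v ++ u ++ w ∈ I) →
      (∀ u ∈ J, ∀ v w : List A, v ++ u ++ w ∈ J) →
      (∀ x y : ℕ → A, relTau (I ∩ J) x y ↔ (relTau I x y ∧ relTau J x y)) ∧
      (∀ x y : ℕ → A, relTau (I ∪ J) x y ↔ (relTau I x y ∨ relTau J x y))) ∧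
    (∀ I J : Set (List A),
      (∀ u ∈ I, ∀ v w : List A, v ++ u ++ w ∈ I) →
      (∀ u ∈ J, ∀ v w : List A, v ++ u ++ w ∈ J) →
      ((∀ x y : ℕ → A, relTau I x y → relTau J x y) ↔ I ⊆ J)) := by
  have left_closed : ∀ K : Set (List A), (∀ u ∈ K, ∀ v w : List A, v ++ u ++ w ∈ K) →
      ∀ u ∈ K, ∀ w : List A, w ++ u ∈ K := fun K hK u hu w => by
    simpa using hK u hu w []
  obtain ⟨a, b, hab⟩ := h2
  exact ⟨fun I J hI hJ =>
      ⟨fun _ _ => relTau_inter (left_closed I hI) (left_closed J hJ), fun _ _ => relTau_union⟩,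
    fun I J _ hJ => relTau_le_iff_subset hab (left_closed J hJ)⟩

/-- if |A| > 1 then, for two-sided ideals I, J of A*,
  τ_{I∩J} = τ_I ∩ τ_J and τ_{I∪J} = τ_I ∪ τ_J; moreover I ↦ τ_I is
  order-reflecting (hence injective), so it is a lattice isomorphism from the
  lattice of ideals of A* onto the lattice of special right congruences. -/
theorem relTau_lattice_iso {A : Type*} [Fintype A] (h2 : ∃ a b : A, a ≠ b) :
    (∀ I J : Set (List A),
      (∀ u ∈ I, ∀ v w : List A, v ++ u ++ w ∈ I) →
      (∀ u ∈ J, ∀ v w : List A, v ++ u ++ w ∈ J) →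
      (∀ x y : ℕ → A, relTau (I ∩ J) x y ↔ (relTau I x y ∧ relTau J x y)) ∧
      (∀ x y : ℕ → A, relTau (I ∪ J) x y ↔ (relTau I x y ∨ relTau J x y))) ∧
    (∀ I J : Set (List A),
      (∀ u ∈ I, ∀ v w : List A, v ++ u ++ w ∈ I) →
      (∀ u ∈ J, ∀ v w : List A, v ++ u ++ w ∈ J) →
      ((∀ x y : ℕ → A, relTau I x y → relTau J x y) ↔ I ⊆ J)) :=
  relTau_lattice_iso_general h2
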